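/- arXiv:2301.00585 — 2 statements merged into one kernel-verified Lean document; each statement's English description precedes it below -/
import Mathlib

section
/- Let 0 < γ ≤ 1 and let c be a real constant. Then for every real t > 0 the function τ ↦ E_{γ,1}(c τ^γ) is differentiable at t with derivative c · t^{γ−1} · E_{γ,γ}(c t^γ); that is, (d/dτ)E_{γ,1}(c τ^γ) = c τ^{γ−1} E_{γ,γ}(c τ^γ) for τ > 0. -/
/-!
Differentiate the series term by term: since `(k + 1) / Γ(γ (k + 1) + 1) = γ⁻¹ / Γ(γ k + γ)`,
the derivative of `E_{γ,1}` is `γ⁻¹ E_{γ,γ}`, and the chain rule with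
`(c τ^γ)' = c γ τ^{γ-1}` gives the claim. Termwise differentiation is legitimate on every
bounded interval because `Γ` outgrows every exponential, so all the series involved converge
for every argument.
-/

/-- The real two-parameter Mittag-Leffler function
`E_{γ,β}(t) = ∑_{k=0}^∞ t^k / Γ(γ k + β)`. -/
noncomputable def mittagLeffler (γ β : ℝ) (t : ℝ) : ℝ :=
  ∑' k : ℕ, t ^ k / Real.Gamma (γ * k + β)

open Real Filter Nat

lemma eventually_pow_add_two_le_factorial (R : ℝ) : ∀ᶠ n : ℕ in atTop, R ^ (n + 2) ≤ n ! := by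
  have h := ((FloorSemiring.tendsto_pow_div_factorial_atTop R).const_mul (R ^ 2))
    |>.eventually_le_const (u := 1) (by simp)
  filter_upwards [h] with n hn
  rwa [mul_div_assoc', div_le_one (mod_cast n.factorial_pos), ← pow_add, add_comm] at hn

lemma Real.eventually_rpow_le_Gamma {R : ℝ} (hR : 1 ≤ R) : ∀ᶠ y : ℝ in atTop, R ^ y ≤ Gamma y := by
  have hfloor : Tendsto (fun y : ℝ => ⌊y - 1⌋₊) atTop atTop :=
    tendsto_nat_floor_atTop.comp (tendsto_atTop_add_const_right _ (-1) tendsto_id)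
  filter_upwards [hfloor.eventually (eventually_pow_add_two_le_factorial R),
    eventually_ge_atTop 3] with y hfac hy
  set n := ⌊y - 1⌋₊
  have hny : (n : ℝ) + 1 ≤ y := by linarith [Nat.floor_le (by linarith : (0 : ℝ) ≤ y - 1)]
  have hyn : y ≤ (n : ℝ) + 2 := by linarith [Nat.lt_floor_add_one (y - 1)]
  calc R ^ y ≤ R ^ ((n : ℝ) + 2) := rpow_le_rpow_of_exponent_le hR hyn
    _ = R ^ (n + 2) := by norm_cast
    _ ≤ n ! := hfac
    _ = Gamma (n + 1) := (Gamma_nat_eq_factorial n).symm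
    _ ≤ Gamma y := Gamma_strictMonoOn_Ici.monotoneOn
        (by simp only [Set.mem_Ici]; linarith) (by simp only [Set.mem_Ici]; linarith) hny

lemma summable_pow_div_Gamma_mul_add {γ : ℝ} (hγ : 0 < γ) (β x : ℝ) :
    Summable fun k : ℕ => x ^ k / Gamma (γ * k + β) := by
  set R := (|x| + 1) ^ γ⁻¹
  have hR1 : 1 ≤ R := one_le_rpow (by linarith [abs_nonneg x]) (inv_nonneg.2 hγ.le)
  have hR0 : 0 < R := by linarith
  have hRγ : R ^ γ = |x| + 1 := rpow_inv_rpow (by positivity) hγ.ne'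
  have hratio : |x| / R ^ γ < 1 := by rw [hRγ, div_lt_one (by positivity)]; linarith
  have htend : Tendsto (fun k : ℕ => γ * k + β) atTop atTop :=
    tendsto_atTop_add_const_right _ β (tendsto_natCast_atTop_atTop.const_mul_atTop hγ)
  refine .of_norm_bounded_eventually
    ((summable_geometric_of_lt_one (by positivity) hratio).mul_left (R ^ β)⁻¹) ?_
  rw [Nat.cofinite_eq_atTop]
  filter_upwards [htend.eventually (eventually_rpow_le_Gamma hR1)] with k hk
  have hΓ : 0 < Gamma (γ * k + β) := (rpow_pos_of_pos hR0 _).trans_le hk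
  have hRk : R ^ (γ * k + β) = (R ^ γ) ^ k * R ^ β := by
    rw [rpow_add hR0, rpow_mul hR0.le, rpow_natCast]
  calc ‖x ^ k / Gamma (γ * k + β)‖ = |x| ^ k / Gamma (γ * k + β) := by
        rw [norm_div, norm_pow, Real.norm_eq_abs, Real.norm_of_nonneg hΓ.le]
    _ ≤ |x| ^ k / R ^ (γ * k + β) := div_le_div_of_nonneg_left (by positivity) (by positivity) hk
    _ = (R ^ β)⁻¹ * (|x| / R ^ γ) ^ k := by rw [hRk, div_pow]; field_simp

lemma succ_mul_pow_div_Gamma_mul_succ_add_one {γ : ℝ} (hγ : γ ≠ 0) (k : ℕ) (x : ℝ) :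
    ((k + 1 : ℕ) : ℝ) * x ^ k / Gamma (γ * (k + 1 : ℕ) + 1) =
      γ⁻¹ * (x ^ k / Gamma (γ * k + γ)) := by
  have hk : γ * (k + 1 : ℕ) ≠ 0 := mul_ne_zero hγ (Nat.cast_ne_zero.2 k.succ_ne_zero)
  have hk' : (k : ℝ) + 1 ≠ 0 := by positivity
  rw [Gamma_add_one hk]
  push_cast
  rw [mul_add_one γ]
  field_simp

lemma hasSum_mul_pow_pred_div_Gamma {γ : ℝ} (hγ : 0 < γ) (x : ℝ) :
    HasSum (fun k : ℕ => k * x ^ (k - 1) / Gamma (γ * k + 1)) (γ⁻¹ * mittagLeffler γ γ x) := by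
  rw [← hasSum_nat_add_iff' 1]
  simp only [Finset.range_one, Finset.sum_singleton, CharP.cast_eq_zero, zero_mul, zero_div,
    sub_zero, Nat.add_sub_cancel, succ_mul_pow_div_Gamma_mul_succ_add_one hγ.ne']
  exact (summable_pow_div_Gamma_mul_add hγ γ x).hasSum.mul_left γ⁻¹

theorem hasDerivAt_mittagLeffler_one {γ : ℝ} (hγ : 0 < γ) (x : ℝ) :
    HasDerivAt (mittagLeffler γ 1) (γ⁻¹ * mittagLeffler γ γ x) x := by
  set R := |x| + 1
  have hbound (k : ℕ) (y : ℝ) (hy : y ∈ Set.Ioo (-R) R) :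
      ‖k * y ^ (k - 1) / Gamma (γ * k + 1)‖ ≤ k * R ^ (k - 1) / Gamma (γ * k + 1) := by
    have hΓ : 0 < Gamma (γ * k + 1) := Gamma_pos_of_pos (by positivity)
    rw [norm_div, norm_mul, norm_pow, Real.norm_natCast, Real.norm_of_nonneg hΓ.le]
    gcongr
    exact (abs_lt.2 hy).le
  have hx : x ∈ Set.Ioo (-R) R := abs_lt.1 (lt_add_one |x|)
  rw [← (hasSum_mul_pow_pred_div_Gamma hγ x).tsum_eq]
  exact hasDerivAt_tsum_of_isPreconnected (hasSum_mul_pow_pred_div_Gamma hγ R).summable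
    isOpen_Ioo isPreconnected_Ioo (fun k y _ => (hasDerivAt_pow k y).div_const _) hbound hx
    (summable_pow_div_Gamma_mul_add hγ 1 x) hx

theorem mittagLeffler_hasDerivAt_general (γ c t : ℝ) (hγ0 : 0 < γ) (ht : 0 < t) :
    HasDerivAt (fun τ : ℝ => mittagLeffler γ 1 (c * τ ^ γ))
      (c * t ^ (γ - 1) * mittagLeffler γ γ (c * t ^ γ)) t := by
  have hinner : HasDerivAt (fun τ : ℝ => c * τ ^ γ) (c * (γ * t ^ (γ - 1))) t :=
    (hasDerivAt_rpow_const (Or.inl ht.ne')).const_mul c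
  refine ((hasDerivAt_mittagLeffler_one hγ0 (c * t ^ γ)).comp t hinner).congr_deriv ?_
  field_simp

/-- For `0 < γ ≤ 1`, a real constant `c` and `t > 0`, the function
`τ ↦ E_{γ,1}(c τ^γ)` is differentiable at `t` with derivative
`c · t^{γ−1} · E_{γ,γ}(c t^γ)`. -/
theorem mittagLeffler_hasDerivAt (γ c t : ℝ) (hγ0 : 0 < γ) (hγ1 : γ ≤ 1) (ht : 0 < t) :
    HasDerivAt (fun τ : ℝ => mittagLeffler γ 1 (c * τ ^ γ))
      (c * t ^ (γ - 1) * mittagLeffler γ γ (c * t ^ γ)) t :=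
  mittagLeffler_hasDerivAt_general γ c t hγ0 ht
end

section
/- Let ε > 0 and define u(t,x) := (ε/√π) ∫₀^∞ ((1 − e^{−λ² t})/(1 − e^{−λ²})) · e^{−λ²/4} · cos(λx) dλ and f(x) := (ε/√π) ∫₀^∞ (λ² e^{−λ²/4}/(1 − e^{−λ²})) · cos(λx) dλ. Then for every t ∈ (0,1) and every x > 0 the function u is differentiable in t and twice differentiable in x at (t,x), and ∂_t u(t,x) − ∂²_{xx} u(t,x) = f(x). -/
open Real MeasureTheory

/-! In Fourier-cosine variables `u(t, ·)` has amplitude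
`w(t, λ) = (1 − e^{−λ²t}) / (1 − e^{−λ²}) · e^{−λ²/4}`, and since `∂²ₓ cos(λx) = −λ² cos(λx)`
the equation reduces to the pointwise identity `∂ₜw + λ² w = λ² e^{−λ²/4} / (1 − e^{−λ²})`,
the amplitude of `f`. Differentiation under the integral sign is justified because for
`0 ≤ t ≤ 1` both `w` and `∂ₜw` are bounded by `(1 + λ²) e^{−λ²/4}`. -/

/-- The perturbed solution of the stability test:
`u(t,x) = (ε/√π) ∫₀^∞ ((1 − e^{−λ²t})/(1 − e^{−λ²})) e^{−λ²/4} cos(λx) dλ`. -/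
noncomputable def uPert (ε t x : ℝ) : ℝ :=
  (ε / Real.sqrt Real.pi) *
    ∫ l in Set.Ioi (0 : ℝ),
      ((1 - Real.exp (-l ^ 2 * t)) / (1 - Real.exp (-l ^ 2))) *
        Real.exp (-l ^ 2 / 4) * Real.cos (l * x)

/-- The perturbed source of the stability test:
`f(x) = (ε/√π) ∫₀^∞ (λ² e^{−λ²/4}/(1 − e^{−λ²})) cos(λx) dλ`. -/
noncomputable def fPert (ε x : ℝ) : ℝ :=
  (ε / Real.sqrt Real.pi) *
    ∫ l in Set.Ioi (0 : ℝ),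
      (l ^ 2 * Real.exp (-l ^ 2 / 4) / (1 - Real.exp (-l ^ 2))) * Real.cos (l * x)

section CosineTransform

variable {μ : Measure ℝ} {a : ℝ → ℝ}

lemma MeasureTheory.Integrable.mul_cos_mul (ha : Integrable a μ) (x : ℝ) :
    Integrable (fun l => a l * cos (l * x)) μ :=
  ha.mul_bdd (by fun_prop : Continuous fun l => cos (l * x)).aestronglyMeasurable
    (ae_of_all _ fun l => by simpa using abs_cos_le_one (l * x))

lemma MeasureTheory.Integrable.mul_sin_mul (ha : Integrable a μ) (x : ℝ) :
    Integrable (fun l => a l * sin (l * x)) μ :=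
  ha.mul_bdd (by fun_prop : Continuous fun l => sin (l * x)).aestronglyMeasurable
    (ae_of_all _ fun l => by simpa using abs_sin_le_one (l * x))

lemma hasDerivAt_integral_mul_cos (ha : Integrable a μ)
    (hla : Integrable (fun l => l * a l) μ) (x : ℝ) :
    HasDerivAt (fun y => ∫ l, a l * cos (l * y) ∂μ) (∫ l, -(l * a l) * sin (l * x) ∂μ) x := by
  have hnla : Integrable (fun l => -(l * a l)) μ := hla.neg
  refine (hasDerivAt_integral_of_dominated_loc_of_deriv_le Filter.univ_mem
    (F' := fun y l => -(l * a l) * sin (l * y)) (bound := fun l => ‖l * a l‖)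
    (Filter.Eventually.of_forall fun y => (ha.mul_cos_mul y).aestronglyMeasurable)
    (ha.mul_cos_mul x) (hnla.mul_sin_mul x).aestronglyMeasurable
    (ae_of_all _ fun l y _ => ?_) hla.norm (ae_of_all _ fun l y _ => ?_)).2
  · rw [norm_mul, norm_neg]
    exact mul_le_of_le_one_right (norm_nonneg _) (by simpa using abs_sin_le_one (l * y))
  · refine (((hasDerivAt_id' y).const_mul l).cos.const_mul (a l)).congr_deriv ?_
    ring

lemma hasDerivAt_integral_mul_sin (ha : Integrable a μ)
    (hla : Integrable (fun l => l * a l) μ) (x : ℝ) :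
    HasDerivAt (fun y => ∫ l, a l * sin (l * y) ∂μ) (∫ l, l * a l * cos (l * x) ∂μ) x := by
  refine (hasDerivAt_integral_of_dominated_loc_of_deriv_le Filter.univ_mem
    (F' := fun y l => l * a l * cos (l * y)) (bound := fun l => ‖l * a l‖)
    (Filter.Eventually.of_forall fun y => (ha.mul_sin_mul y).aestronglyMeasurable)
    (ha.mul_sin_mul x) (hla.mul_cos_mul x).aestronglyMeasurable
    (ae_of_all _ fun l y _ => ?_) hla.norm (ae_of_all _ fun l y _ => ?_)).2
  · rw [norm_mul]
    exact mul_le_of_le_one_right (norm_nonneg _) (by simpa using abs_cos_le_one (l * y))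
  · refine (((hasDerivAt_id' y).const_mul l).sin.const_mul (a l)).congr_deriv ?_
    ring

lemma hasDerivAt_deriv_integral_mul_cos (ha : Integrable a μ)
    (hla : Integrable (fun l => l * a l) μ) (hl2a : Integrable (fun l => l ^ 2 * a l) μ)
    (x : ℝ) :
    HasDerivAt (deriv fun y => ∫ l, a l * cos (l * y) ∂μ)
      (-∫ l, l ^ 2 * a l * cos (l * x) ∂μ) x := by
  have hderiv : (deriv fun y => ∫ l, a l * cos (l * y) ∂μ) =
      fun y => ∫ l, -(l * a l) * sin (l * y) ∂μ :=
    funext fun y => (hasDerivAt_integral_mul_cos ha hla y).deriv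
  have hnla : Integrable (fun l => -(l * a l)) μ := hla.neg
  have hl2a' : Integrable (fun l => l * -(l * a l)) μ :=
    hl2a.neg.congr (ae_of_all _ fun l => by simp only [Pi.neg_apply]; ring)
  rw [hderiv, ← integral_neg]
  refine (hasDerivAt_integral_mul_sin hnla hl2a' x).congr_deriv ?_
  congr 1 with l
  ring

end CosineTransform

lemma one_sub_exp_neg_pos {u : ℝ} (hu : 0 < u) : 0 < 1 - exp (-u) :=
  sub_pos.2 (exp_lt_one_iff.2 (neg_neg_of_pos hu))

lemma div_one_sub_exp_neg_le {u : ℝ} (hu : 0 < u) : u / (1 - exp (-u)) ≤ 1 + u := by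
  have hD := one_sub_exp_neg_pos hu
  -- equivalently `(1 + u) e^{-u} ≤ 1`, i.e. `1 + u ≤ e^u`
  have hexp : exp (-u) * exp u = 1 := by rw [← exp_add, neg_add_cancel, exp_zero]
  rw [div_le_iff₀ hD]
  nlinarith [add_one_le_exp u, exp_pos (-u)]

lemma integrableOn_pow_mul_exp_neg_sq_div_four (k : ℕ) :
    IntegrableOn (fun l : ℝ => l ^ k * exp (-l ^ 2 / 4)) (Set.Ioi 0) := by
  refine (integrableOn_rpow_mul_exp_neg_mul_sq (b := 1 / 4) (by norm_num)
    (s := k) (by linarith [k.cast_nonneg (α := ℝ)])).congr_fun (fun l _ => ?_) measurableSet_Ioi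
  dsimp only
  rw [rpow_natCast]
  ring_nf

lemma integrableOn_one_add_sq_mul_exp_neg_sq_div_four :
    IntegrableOn (fun l : ℝ => (1 + l ^ 2) * exp (-l ^ 2 / 4)) (Set.Ioi 0) :=
  ((integrableOn_pow_mul_exp_neg_sq_div_four 0).add
    (integrableOn_pow_mul_exp_neg_sq_div_four 2)).congr_fun
    (fun l _ => by simp only [Pi.add_apply]; ring) measurableSet_Ioi

section HeatWeight

variable {t l : ℝ}

noncomputable def heatWeight (t l : ℝ) : ℝ :=
  (1 - exp (-l ^ 2 * t)) / (1 - exp (-l ^ 2)) * exp (-l ^ 2 / 4)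

noncomputable def heatWeightDeriv (t l : ℝ) : ℝ :=
  l ^ 2 * exp (-l ^ 2 * t) / (1 - exp (-l ^ 2)) * exp (-l ^ 2 / 4)

lemma uPert_eq_integral_heatWeight (ε t x : ℝ) :
    uPert ε t x = ε / √π * ∫ l in Set.Ioi 0, heatWeight t l * cos (l * x) := rfl

lemma hasDerivAt_heatWeight (t l : ℝ) :
    HasDerivAt (fun s => heatWeight s l) (heatWeightDeriv t l) t := by
  have hexp := ((hasDerivAt_id' t).const_mul (-l ^ 2)).exp
  refine (((hasDerivAt_const t 1).sub hexp).div_const _ |>.mul_const _).congr_deriv ?_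
  unfold heatWeightDeriv
  ring

lemma heatWeightDeriv_add_sq_mul_heatWeight (t l : ℝ) :
    heatWeightDeriv t l + l ^ 2 * heatWeight t l =
      l ^ 2 * exp (-l ^ 2 / 4) / (1 - exp (-l ^ 2)) := by
  unfold heatWeightDeriv heatWeight
  ring

lemma measurable_heatWeight (t : ℝ) : Measurable (heatWeight t) := by
  unfold heatWeight
  fun_prop

lemma measurable_heatWeightDeriv (t : ℝ) : Measurable (heatWeightDeriv t) := by
  unfold heatWeightDeriv
  fun_prop

lemma abs_heatWeight_le (hl : 0 < l) (ht0 : 0 ≤ t) (ht1 : t ≤ 1) :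
    |heatWeight t l| ≤ exp (-l ^ 2 / 4) := by
  have hl2 : 0 < l ^ 2 := pow_pos hl 2
  have hD := one_sub_exp_neg_pos hl2
  have hnum : 0 ≤ 1 - exp (-l ^ 2 * t) := sub_nonneg.2 (exp_le_one_iff.2 (by nlinarith))
  have hle : 1 - exp (-l ^ 2 * t) ≤ 1 - exp (-l ^ 2) := by
    gcongr
    nlinarith
  unfold heatWeight
  rw [abs_of_nonneg (by positivity)]
  exact mul_le_of_le_one_left (exp_pos _).le ((div_le_one hD).2 hle)

lemma abs_heatWeightDeriv_le (hl : 0 < l) (ht : 0 ≤ t) :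
    |heatWeightDeriv t l| ≤ (1 + l ^ 2) * exp (-l ^ 2 / 4) := by
  have hl2 : 0 < l ^ 2 := pow_pos hl 2
  have hD := one_sub_exp_neg_pos hl2
  have hexp : exp (-l ^ 2 * t) ≤ 1 := exp_le_one_iff.2 (by nlinarith)
  have hform : heatWeightDeriv t l = exp (-l ^ 2 * t) * (l ^ 2 / (1 - exp (-l ^ 2))) *
      exp (-l ^ 2 / 4) := by
    unfold heatWeightDeriv
    ring
  rw [hform, abs_of_nonneg (by positivity)]
  calc exp (-l ^ 2 * t) * (l ^ 2 / (1 - exp (-l ^ 2))) * exp (-l ^ 2 / 4)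
      ≤ 1 * (1 + l ^ 2) * exp (-l ^ 2 / 4) := by
        gcongr
        exact div_one_sub_exp_neg_le hl2
    _ = (1 + l ^ 2) * exp (-l ^ 2 / 4) := by rw [one_mul]

lemma integrableOn_pow_mul_heatWeight (k : ℕ) (ht0 : 0 ≤ t) (ht1 : t ≤ 1) :
    IntegrableOn (fun l => l ^ k * heatWeight t l) (Set.Ioi 0) := by
  refine (integrableOn_pow_mul_exp_neg_sq_div_four k).mono'
    ((measurable_id.pow_const k).mul (measurable_heatWeight t)).aestronglyMeasurable ?_
  refine (ae_restrict_iff' measurableSet_Ioi).2 (ae_of_all _ fun l hl => ?_)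
  rw [norm_mul, norm_pow, norm_of_nonneg hl.le, norm_eq_abs]
  exact mul_le_mul_of_nonneg_left (abs_heatWeight_le hl ht0 ht1) (pow_nonneg hl.le k)

lemma integrableOn_heatWeightDeriv (ht : 0 ≤ t) :
    IntegrableOn (heatWeightDeriv t) (Set.Ioi 0) := by
  refine integrableOn_one_add_sq_mul_exp_neg_sq_div_four.mono'
    (measurable_heatWeightDeriv t).aestronglyMeasurable ?_
  exact (ae_restrict_iff' measurableSet_Ioi).2
    (ae_of_all _ fun l hl => abs_heatWeightDeriv_le hl ht)

lemma hasDerivAt_integral_heatWeight_mul_cos (ht0 : 0 < t) (ht1 : t ≤ 1) (x : ℝ) :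
    HasDerivAt (fun s => ∫ l in Set.Ioi 0, heatWeight s l * cos (l * x))
      (∫ l in Set.Ioi 0, heatWeightDeriv t l * cos (l * x)) t := by
  have hw : IntegrableOn (heatWeight t) (Set.Ioi 0) := by
    simpa using integrableOn_pow_mul_heatWeight 0 ht0.le ht1
  refine (hasDerivAt_integral_of_dominated_loc_of_deriv_le (Ioi_mem_nhds ht0)
    (F' := fun s l => heatWeightDeriv s l * cos (l * x))
    (Filter.Eventually.of_forall fun s =>
      ((measurable_heatWeight s).mul (by fun_prop)).aestronglyMeasurable)
    (hw.mul_cos_mul x) ((integrableOn_heatWeightDeriv ht0.le).mul_cos_mul x).aestronglyMeasurable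
    ?_ integrableOn_one_add_sq_mul_exp_neg_sq_div_four ?_).2
  · refine (ae_restrict_iff' measurableSet_Ioi).2 (ae_of_all _ fun l hl s hs => ?_)
    rw [norm_mul, norm_eq_abs]
    exact mul_le_of_le_one_right (by positivity) (by simpa using abs_cos_le_one (l * x))
      |>.trans (abs_heatWeightDeriv_le hl hs.le)
  · exact ae_of_all _ fun l s _ => (hasDerivAt_heatWeight s l).mul_const _

end HeatWeight

theorem uPert_solves_heat_general (ε : ℝ) :
    ∀ t ∈ Set.Ioo (0 : ℝ) 1, ∀ x : ℝ, 0 < x →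
      DifferentiableAt ℝ (fun s : ℝ => uPert ε s x) t ∧
      DifferentiableAt ℝ (fun y : ℝ => uPert ε t y) x ∧
      DifferentiableAt ℝ (fun y : ℝ => deriv (fun z : ℝ => uPert ε t z) y) x ∧
      deriv (fun s : ℝ => uPert ε s x) t -
        deriv (fun y : ℝ => deriv (fun z : ℝ => uPert ε t z) y) x = fPert ε x := by
  rintro t ⟨ht0, ht1⟩ x -
  have hw (k : ℕ) : IntegrableOn (fun l => l ^ k * heatWeight t l) (Set.Ioi 0) :=
    integrableOn_pow_mul_heatWeight k ht0.le ht1.le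
  have hw0 : IntegrableOn (heatWeight t) (Set.Ioi 0) := by simpa using hw 0
  have hw1 : IntegrableOn (fun l => l * heatWeight t l) (Set.Ioi 0) := by simpa using hw 1
  have hT := hasDerivAt_integral_heatWeight_mul_cos ht0 ht1.le x
  have hX := hasDerivAt_integral_mul_cos hw0 hw1 x
  have hXX := hasDerivAt_deriv_integral_mul_cos hw0 hw1 (hw 2) x
  simp only [uPert_eq_integral_heatWeight, deriv_const_mul_field']
  refine ⟨(hT.const_mul _).differentiableAt, (hX.const_mul _).differentiableAt,
    (hXX.const_mul _).differentiableAt, ?_⟩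
  rw [hT.deriv, hXX.deriv, fPert, ← mul_sub, sub_neg_eq_add,
    ← integral_add ((integrableOn_heatWeightDeriv ht0.le).mul_cos_mul x) ((hw 2).mul_cos_mul x)]
  congr 2 with l
  rw [← heatWeightDeriv_add_sq_mul_heatWeight]
  ring

/-- For `ε > 0`, every `t ∈ (0,1)` and `x > 0`, the pair `(u, f)` of the
stability test satisfies the heat equation `∂ₜu − ∂²ₓₓu = f(x)`: `u` is
differentiable in `t`, twice differentiable in `x`, and the equation holds. -/
theorem uPert_solves_heat (ε : ℝ) (hε : 0 < ε) :
    ∀ t ∈ Set.Ioo (0 : ℝ) 1, ∀ x : ℝ, 0 < x →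
      DifferentiableAt ℝ (fun s : ℝ => uPert ε s x) t ∧
      DifferentiableAt ℝ (fun y : ℝ => uPert ε t y) x ∧
      DifferentiableAt ℝ (fun y : ℝ => deriv (fun z : ℝ => uPert ε t z) y) x ∧
      deriv (fun s : ℝ => uPert ε s x) t -
        deriv (fun y : ℝ => deriv (fun z : ℝ => uPert ε t z) y) x = fPert ε x :=
  uPert_solves_heat_general ε
end
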